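/- arXiv:1308.0423 — 2 statements merged into one kernel-verified Lean document; each statement's English description precedes it below -/
import Mathlib

section
/- Let G be a finite group acting faithfully on a field L, and suppose G also acts on the rational function field L(x₁,...,x_m) extending the action on L in such a way that for each σ ∈ G there is a matrix A(σ) ∈ GL_m(L) and a column vector B(σ) ∈ Lᵐ with (σ(x₁),...,σ(x_m))ᵀ = A(σ)·(x₁,...,x_m)ᵀ + B(σ). Then there exist elements z₁,...,z_m ∈ L(x₁,...,x_m), each of the form z_j = Σᵢ a_{ij} xᵢ + c_j with (a_{ij}) ∈ GL_m(L) and c_j ∈ L, such that L(x₁,...,x_m) = L(z₁,...,z_m) and σ(z_j) = z_j for all σ ∈ G and all j. Consequently L(x₁,...,x_m)^G = L^G(z₁,...,z_m) is purely transcendental over L^G. -/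
open Module MvPolynomial


open Module

lemma dedekind_span (G L : Type*) [Group G] [Finite G] [Field L]
    [MulSemiringAction G L] [FaithfulSMul G L] :
    Submodule.span L (Set.range (fun ℓ : L => fun σ : G => σ • ℓ)) = ⊤ := by
  have : Fintype G := Fintype.ofFinite G
  classical
  by_contra h
  obtain ⟨φ, hφ0, hφ⟩ := Submodule.exists_dual_map_eq_bot_of_lt_top
    (lt_top_iff_ne_top.2 h) inferInstance
  have hv : ∀ ℓ : L, φ (fun σ => σ • ℓ) = 0 := by
    intro ℓ
    have hm : φ (fun σ => σ • ℓ) ∈ Submodule.map φ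
        (Submodule.span L (Set.range (fun ℓ : L => fun σ : G => σ • ℓ))) :=
      Submodule.mem_map_of_mem (Submodule.subset_span ⟨ℓ, rfl⟩)
    rw [hφ] at hm
    exact (Submodule.mem_bot L).1 hm
  set c : G → L := fun σ => φ (Pi.single σ 1) with hc
  have hrepr : ∀ f : G → L, φ f = ∑ σ, f σ * c σ := by
    intro f
    have hf : f = ∑ σ : G, f σ • (Pi.single σ 1 : G → L) := by
      ext τ
      simp [Finset.sum_apply, Pi.single_apply]
    conv_lhs => rw [hf]
    rw [map_sum]
    simp [c, smul_eq_mul]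
  -- Dedekind independence of the automorphisms
  have hinj : Function.Injective
      (fun σ : G => ((MulSemiringAction.toRingHom G L σ : L →+* L) : L →* L)) := by
    intro σ τ hst
    apply FaithfulSMul.eq_of_smul_eq_smul (α := L)
    intro a
    exact DFunLike.congr_fun hst a
  have hli : LinearIndependent L
      (fun σ : G => ⇑((MulSemiringAction.toRingHom G L σ : L →+* L) : L →* L)) :=
    (linearIndependent_monoidHom L L).comp _ hinj
  have hc0 : ∀ σ : G, c σ = 0 := by
    have := linearIndependent_iff'.1 hli Finset.univ c ?_
    · intro σ; exact this σ (Finset.mem_univ σ)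
    · ext ℓ
      have := hv ℓ
      rw [hrepr] at this
      simpa [mul_comm] using this
  apply hφ0
  apply LinearMap.ext
  intro f
  rw [hrepr]
  simp [hc0]
lemma smul_lsmul {G L K : Type*} [Group G] [Field L] [Field K] [Algebra L K]
    [MulSemiringAction G L] [MulSemiringAction G K]
    (hcompat : ∀ (σ : G) (a : L), σ • (algebraMap L K a) = algebraMap L K (σ • a))
    (τ : G) (ℓ : L) (k : K) : τ • (ℓ • k) = (τ • ℓ) • (τ • k) := by
  rw [Algebra.smul_def, Algebra.smul_def, smul_mul', hcompat]

lemma mem_span_invariants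
    {G L K : Type*} [Group G] [Finite G] [Field L] [Field K] [Algebra L K]
    [MulSemiringAction G L] [MulSemiringAction G K] [FaithfulSMul G L]
    (hcompat : ∀ (σ : G) (a : L), σ • (algebraMap L K a) = algebraMap L K (σ • a))
    (V : Submodule L K) (hV : ∀ (σ : G), ∀ v ∈ V, σ • v ∈ V)
    {v : K} (hv : v ∈ V) :
    v ∈ Submodule.span L {w : K | w ∈ V ∧ ∀ σ : G, σ • w = w} := by
  have : Fintype G := Fintype.ofFinite G
  classical
  have h1 : (Pi.single (1:G) 1 : G → L) ∈
      Submodule.span L (Set.range fun ℓ : L => fun σ : G => σ • ℓ) := by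
    rw [dedekind_span G L]; trivial
  rw [Finsupp.mem_span_range_iff_exists_finsupp] at h1
  obtain ⟨d, hd⟩ := h1
  set T : L → K := fun ℓ => ∑ σ : G, (σ • ℓ) • (σ • v) with hT
  have hTinv : ∀ (ℓ : L) (τ : G), τ • T ℓ = T ℓ := by
    intro ℓ τ
    rw [hT]
    simp only
    rw [Finset.smul_sum]
    refine Fintype.sum_equiv (Equiv.mulLeft τ) _ _ ?_
    intro σ
    rw [smul_lsmul hcompat, smul_smul, smul_smul]
    rfl
  have hTV : ∀ ℓ : L, T ℓ ∈ V :=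
    fun ℓ => Submodule.sum_mem _ fun σ _ => Submodule.smul_mem _ _ (hV σ v hv)
  have hveq : v = d.sum fun ℓ dℓ => dℓ • T ℓ := by
    have hds : ∀ σ : G, (d.sum fun ℓ dℓ => dℓ * (σ • ℓ)) = (Pi.single (1:G) 1 : G → L) σ := by
      intro σ
      have h := congrFun hd σ
      simp only [Finsupp.sum, Finset.sum_apply, Pi.smul_apply, smul_eq_mul] at h ⊢
      exact h
    calc v = ∑ σ : G, ((Pi.single (1:G) 1 : G → L) σ) • (σ • v) := by
            rw [Finset.sum_eq_single (1:G)]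
            · simp
            · intro τ _ hτ; simp [Pi.single_apply, hτ]
            · intro h; exact absurd (Finset.mem_univ _) h
      _ = ∑ σ : G, (d.sum fun ℓ dℓ => dℓ * (σ • ℓ)) • (σ • v) := by
            simp_rw [hds]
      _ = d.sum fun ℓ dℓ => dℓ • T ℓ := by
            simp only [Finsupp.sum]
            simp_rw [Finset.sum_smul]
            rw [Finset.sum_comm]
            refine Finset.sum_congr rfl fun σ _ => ?_
            rw [hT]
            simp only [Finset.smul_sum]
            refine Finset.sum_congr rfl fun ℓ _ => ?_
            rw [mul_smul]
  rw [hveq]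
  refine Submodule.sum_mem _ fun ℓ _ => Submodule.smul_mem _ _ ?_
  exact Submodule.subset_span ⟨hTV ℓ, hTinv ℓ⟩
lemma linearIndependent_one_cons {L K : Type*} [Field L] [Field K] [Algebra L K] {m : ℕ}
    {x : Fin m → K} (hx : AlgebraicIndependent L x) :
    LinearIndependent L (Fin.cons 1 x : Fin (m + 1) → K) := by
  classical
  rw [Fintype.linearIndependent_iff]
  intro g hg
  set p : MvPolynomial (Fin m) L := C (g 0) + ∑ i, C (g i.succ) * X i with hp
  have hev : aeval x p = 0 := by
    rw [hp]
    simp only [map_add, map_sum, map_mul, aeval_C, aeval_X]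
    rw [← hg, Fin.sum_univ_succ]
    simp [Algebra.smul_def]
  have hp0 : p = 0 := hx (by rw [hev, map_zero])
  intro k
  refine Fin.cases ?_ ?_ k
  · have := congrArg (constantCoeff) hp0
    simpa [hp, coeff_C_mul] using this
  · intro i
    have h2 := congrArg (coeff (Finsupp.single i 1)) hp0
    rw [hp, coeff_add, coeff_sum, coeff_zero, coeff_C] at h2
    simp only [coeff_C_mul, coeff_X'] at h2
    rw [Finset.sum_eq_single i
      (fun j _ hj => by simp [Finsupp.single_eq_single_iff, hj])
      (fun h => absurd (Finset.mem_univ _) h)] at h2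
    simpa [eq_comm, Finsupp.single_eq_zero] using h2
lemma algebraicIndependent_affine {L K : Type*} [Field L] [Field K] [Algebra L K] {m : ℕ}
    {x z : Fin m → K} (hx : AlgebraicIndependent L x)
    (a : Fin m → Fin m → L) (c : Fin m → L) (hdet : (Matrix.of a).det ≠ 0)
    (hz : ∀ j, z j = ∑ i, algebraMap L K (a i j) * x i + algebraMap L K (c j)) :
    AlgebraicIndependent L z := by
  classical
  set M : Matrix (Fin m) (Fin m) L := (Matrix.of a).transpose with hM
  have hdM : M.det ≠ 0 := by rwa [hM, Matrix.det_transpose]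
  set N : Matrix (Fin m) (Fin m) L := M⁻¹ with hN
  have hMN : M * N = 1 := Matrix.mul_nonsing_inv _ (isUnit_iff_ne_zero.2 hdM)
  have hsum : ∀ j k, (∑ i, N i k * a i j) = if j = k then 1 else 0 := by
    intro j k
    have : (M * N) j k = (1 : Matrix (Fin m) (Fin m) L) j k := by rw [hMN]
    rw [Matrix.mul_apply, Matrix.one_apply] at this
    rw [← this]
    refine Finset.sum_congr rfl fun i _ => ?_
    rw [mul_comm]
    rfl
  set φ : MvPolynomial (Fin m) L →ₐ[L] MvPolynomial (Fin m) L :=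
    aeval (fun j => (∑ i, C (a i j) * X i) + C (c j)) with hφ
  set ψ : MvPolynomial (Fin m) L →ₐ[L] MvPolynomial (Fin m) L :=
    aeval (fun i => ∑ j, C (N i j) * (X j - C (c j))) with hψ
  have hψφ : ψ.comp φ = AlgHom.id L _ := by
    apply MvPolynomial.algHom_ext
    intro j
    rw [AlgHom.comp_apply, AlgHom.id_apply, hφ, aeval_X]
    rw [map_add, map_sum]
    simp only [map_mul, aeval_C, aeval_X, hψ, algebraMap_eq]
    calc (∑ i, C (a i j) * ∑ k, C (N i k) * (X k - C (c k))) + C (c j)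
        = (∑ k, C (∑ i, N i k * a i j) * (X k - C (c k))) + C (c j) := by
          congr 1
          simp_rw [Finset.mul_sum, ← mul_assoc, ← C_mul]
          rw [Finset.sum_comm]
          refine Finset.sum_congr rfl fun k _ => ?_
          rw [map_sum, Finset.sum_mul]
          exact Finset.sum_congr rfl fun i _ => by rw [mul_comm (a i j)]
      _ = X j := by
          simp_rw [hsum]
          rw [Finset.sum_eq_single j]
          · simp
          · intro k _ hk; simp [Ne.symm hk, if_neg]
          · intro h; exact absurd (Finset.mem_univ _) h
  have hcomp : (aeval x).comp φ = (aeval z : MvPolynomial (Fin m) L →ₐ[L] K) := by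
    apply MvPolynomial.algHom_ext
    intro j
    rw [AlgHom.comp_apply, hφ, aeval_X, aeval_X, hz j, map_add, map_sum]
    simp only [map_mul, aeval_C, aeval_X]
  rw [algebraicIndependent_iff_injective_aeval]
  intro p q h
  have h2 : φ p = φ q := by
    apply algebraicIndependent_iff_injective_aeval.mp hx
    have hp := DFunLike.congr_fun hcomp p
    have hq := DFunLike.congr_fun hcomp q
    simp only [AlgHom.comp_apply] at hp hq
    rw [hp, hq]; exact h
  calc p = (ψ.comp φ) p := by rw [hψφ]; rfl
    _ = (ψ.comp φ) q := by simp only [AlgHom.comp_apply, h2]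
    _ = q := by rw [hψφ]; rfl
set_option maxHeartbeats 2000000 in
/-- (Hajja–Kang linearization.)  Let a finite group `G` act faithfully on a field `L`
and extend this to an action on the rational function field `K = L(x₁,…,x_m)` by
semilinear affine transformations `σ(x) = A(σ)·x + B(σ)` with `A(σ) ∈ GL_m(L)`,
`B(σ) ∈ Lᵐ`.  Then there are `z_j = Σᵢ a_{ij} xᵢ + c_j` (with `(a_{ij}) ∈ GL_m(L)`,
`c_j ∈ L`) which are `G`-invariant and satisfy `K = L(z₁,…,z_m)`; consequently
`K^G = L^G(z₁,…,z_m)` is purely transcendental over `L^G`. -/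
theorem linearization_of_affine_action
    (G L K : Type*) [Group G] [Finite G] [Field L] [Field K] [Algebra L K]
    [MulSemiringAction G L] [MulSemiringAction G K] [FaithfulSMul G L]
    (hcompat : ∀ (σ : G) (a : L), σ • (algebraMap L K a) = algebraMap L K (σ • a))
    (m : ℕ) (x : Fin m → K) (hx : AlgebraicIndependent L x)
    (hgen : IntermediateField.adjoin L (Set.range x) = ⊤)
    (haff : ∀ σ : G, ∃ (A : Fin m → Fin m → L) (B : Fin m → L),
      IsUnit (Matrix.of A) ∧
      ∀ i, σ • x i = ∑ j, algebraMap L K (A i j) * x j + algebraMap L K (B i)) :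
    ∃ (a : Fin m → Fin m → L) (c : Fin m → L) (z : Fin m → K),
      IsUnit (Matrix.of a) ∧
      (∀ j, z j = ∑ i, algebraMap L K (a i j) * x i + algebraMap L K (c j)) ∧
      (∀ (σ : G) (j : Fin m), σ • z j = z j) ∧
      IntermediateField.adjoin L (Set.range z) = ⊤ ∧
      AlgebraicIndependent ↥((FixedPoints.subfield G L).map (algebraMap L K)) z ∧
      FixedPoints.subfield G K =
        Subfield.closure
          (↑((FixedPoints.subfield G L).map (algebraMap L K)) ∪ Set.range z) := by
  classical
  have : Fintype G := Fintype.ofFinite G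
  set u : Fin (m + 1) → K := Fin.cons 1 x with hu
  have hui : LinearIndependent L u := linearIndependent_one_cons hx
  set V : Submodule L K := Submodule.span L (Set.range u) with hV
  have h1V : (1 : K) ∈ V := Submodule.subset_span ⟨0, rfl⟩
  have hxV : ∀ i, x i ∈ V := fun i => Submodule.subset_span ⟨i.succ, rfl⟩
  -- V is G-stable
  have hVstab : ∀ (σ : G), ∀ v ∈ V, σ • v ∈ V := by
    intro σ v hv
    induction hv using Submodule.span_induction with
    | mem w hw =>
        obtain ⟨k, rfl⟩ := hw
        refine Fin.cases ?_ ?_ k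
        · simpa [hu] using h1V
        · intro i
          obtain ⟨A, B, -, hAB⟩ := haff σ
          have : σ • u i.succ = σ • x i := by rw [hu]; simp
          rw [this, hAB i]
          refine Submodule.add_mem _ (Submodule.sum_mem _ fun j _ => ?_) ?_
          · rw [← Algebra.smul_def]
            exact Submodule.smul_mem _ _ (hxV j)
          · have : algebraMap L K (B i) = (B i) • (1 : K) := by
              rw [Algebra.smul_def, mul_one]
            rw [this]
            exact Submodule.smul_mem _ _ h1V
    | zero => simpa using Submodule.zero_mem V
    | add p q _ _ hp hq => rw [smul_add]; exact Submodule.add_mem _ hp hq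
    | smul ℓ w _ hw =>
        rw [smul_lsmul hcompat]
        exact Submodule.smul_mem _ _ hw
  -- the set of G-invariant elements of V
  set T : Set K := {w : K | w ∈ V ∧ ∀ σ : G, σ • w = w} with hTdef
  have h1T : (1 : K) ∈ T := ⟨h1V, fun σ => smul_one σ⟩
  have hone : LinearIndepOn L id ({1} : Set K) :=
    (linearIndepOn_singleton_iff L).2 one_ne_zero
  have hsub : ({1} : Set K) ⊆ T := Set.singleton_subset_iff.2 h1T
  set b : Set K := hone.extend hsub with hb
  have hbT : b ⊆ T := hone.extend_subset hsub
  have hbV : b ⊆ ↑V := fun w hw => (hbT hw).1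
  have hbind : LinearIndependent L ((↑) : b → K) := hone.linearIndepOn_extend hsub
  have h1b : (1 : K) ∈ b := hone.subset_extend hsub rfl
  have hspanb_eq : Submodule.span L b = V := by
    refine le_antisymm (Submodule.span_le.2 hbV) ?_
    have hTle : Submodule.span L T ≤ Submodule.span L b := by
      rw [Submodule.span_le]
      exact hone.subset_span_extend hsub
    intro v hv
    exact hTle (mem_span_invariants hcompat V hVstab hv)
  -- b is finite of cardinality m + 1
  haveI : Finite ↥(Set.range u) := (Set.finite_range u).to_subtype
  haveI hbfinite : Finite ↥b := by
    refine hbind.finite_of_le_span_finite _ (Set.range u) ?_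
    intro w hw
    obtain ⟨⟨w', hw'⟩, rfl⟩ := hw
    rw [← hV]
    exact hbV hw'
  haveI : Fintype ↥b := Fintype.ofFinite _
  have hcard : b.toFinset.card = m + 1 := by
    have h1 : finrank L (Submodule.span L b) = b.toFinset.card :=
      finrank_span_set_eq_card hbind
    have h2 : finrank L (Submodule.span L (Set.range u)) = Fintype.card (Fin (m + 1)) :=
      finrank_span_eq_card hui
    rw [hspanb_eq, hV] at h1
    rw [h1] at h2
    simpa using h2
  set B' : Finset K := b.toFinset.erase 1 with hB'
  have hB'card : Fintype.card ↥B' = m := by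
    rw [Fintype.card_coe, hB', Finset.card_erase_of_mem (Set.mem_toFinset.2 h1b), hcard]
    omega
  set e : ↥B' ≃ Fin m := Fintype.equivFinOfCardEq hB'card with he
  set z : Fin m → K := fun j => ((e.symm j : ↥B') : K) with hz
  have hzB' : ∀ j, z j ∈ B' := fun j => (e.symm j).2
  have hzb : ∀ j, z j ∈ b := fun j => Set.mem_toFinset.1 (Finset.mem_of_mem_erase (hzB' j))
  have hzT : ∀ j, z j ∈ T := fun j => hbT (hzb j)
  have hzinv : ∀ (σ : G) (j : Fin m), σ • z j = z j := fun σ j => (hzT j).2 σ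
  have hzne1 : ∀ j, z j ≠ 1 := fun j => Finset.ne_of_mem_erase (hzB' j)
  have hzinj : Function.Injective z := by
    intro j j' hjj
    have := e.symm.injective (Subtype.ext hjj)
    simpa using this
  have hrange : Set.range (Fin.cons 1 z : Fin (m + 1) → K) = b := by
    ext w
    constructor
    · rintro ⟨k, rfl⟩
      refine Fin.cases ?_ ?_ k
      · simpa using h1b
      · intro j
        simpa using hzb j
    · intro hw
      by_cases hw1 : w = 1
      · exact ⟨0, by simp [hw1]⟩
      · have hwB' : w ∈ B' := Finset.mem_erase.2 ⟨hw1, Set.mem_toFinset.2 hw⟩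
        refine ⟨(e ⟨w, hwB'⟩).succ, ?_⟩
        simp [hz]
  have hconsinj : Function.Injective (Fin.cons 1 z : Fin (m + 1) → K) := by
    intro k k' hkk
    rcases Fin.eq_zero_or_eq_succ k with rfl | ⟨j, rfl⟩ <;>
      rcases Fin.eq_zero_or_eq_succ k' with rfl | ⟨j', rfl⟩
    · rfl
    · rw [Fin.cons_zero, Fin.cons_succ] at hkk
      exact absurd hkk.symm (hzne1 j')
    · rw [Fin.cons_succ, Fin.cons_zero] at hkk
      exact absurd hkk (hzne1 j)
    · rw [Fin.cons_succ, Fin.cons_succ] at hkk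
      rw [hzinj hkk]
  have hzli : LinearIndependent L (Fin.cons 1 z : Fin (m + 1) → K) := by
    have hmemb : ∀ k : Fin (m + 1), (Fin.cons 1 z : Fin (m + 1) → K) k ∈ b := fun k => hrange ▸ Set.mem_range_self k
    exact hbind.comp (fun k : Fin (m + 1) => (⟨(Fin.cons 1 z : Fin (m + 1) → K) k, hmemb k⟩ : b))
      (fun k k' hkk => hconsinj (congrArg Subtype.val hkk))
  -- coordinates of z in the basis u
  have hmem : ∀ j, ∃ dc : Fin (m + 1) → L, ∑ k, dc k • u k = z j := by
    intro j
    have : z j ∈ Submodule.span L (Set.range u) := by rw [← hV]; exact (hzT j).1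
    exact (Submodule.mem_span_range_iff_exists_fun (R := L)).1 this
  choose dcoef hdcoef using hmem
  set a : Fin m → Fin m → L := fun i j => dcoef j i.succ with ha
  set c : Fin m → L := fun j => dcoef j 0 with hc
  have hzform : ∀ j, z j = ∑ i, algebraMap L K (a i j) * x i + algebraMap L K (c j) := by
    intro j
    rw [← hdcoef j, Fin.sum_univ_succ]
    simp only [hu, Fin.cons_zero, Fin.cons_succ, Algebra.smul_def, mul_one]
    rw [add_comm]
  -- invertibility of a
  have hdet : (Matrix.of a).det ≠ 0 := by
    intro h0
    obtain ⟨v, hvne, hv0⟩ := (Matrix.exists_mulVec_eq_zero_iff).2 h0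
    have hsum1 : ∑ j, v j • z j = (∑ j, v j * c j) • (1 : K) := by
      have hstep : ∀ j, v j • z j = ∑ k, (v j * dcoef j k) • u k := by
        intro j
        rw [← hdcoef j, Finset.smul_sum]
        exact Finset.sum_congr rfl fun k _ => (smul_smul _ _ _)
      rw [Finset.sum_congr rfl fun j _ => hstep j, Finset.sum_comm]
      simp_rw [← Finset.sum_smul]
      rw [Fin.sum_univ_succ]
      have h0' : ∀ i : Fin m, (∑ j, v j * dcoef j i.succ) = 0 := by
        intro i
        have := congrFun hv0 i
        simpa [Matrix.mulVec, dotProduct, mul_comm] using this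
      simp only [h0', zero_smul, Finset.sum_const_zero, add_zero]
      simp [hu, hc]
    have hrel : ∑ k, (Fin.cons (-(∑ j, v j * c j)) v : Fin (m + 1) → L) k •
        (Fin.cons 1 z : Fin (m + 1) → K) k = 0 := by
      rw [Fin.sum_univ_succ]
      simp only [Fin.cons_zero, Fin.cons_succ]
      rw [hsum1, neg_smul]
      simp [Algebra.smul_def]
    have hall := Fintype.linearIndependent_iff.1 hzli _ hrel
    apply hvne
    funext j
    have := hall j.succ
    simpa using this
  have hunit : IsUnit (Matrix.of a) :=
    (Matrix.isUnit_iff_isUnit_det _).2 (isUnit_iff_ne_zero.2 hdet)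
  -- inverse expression of x in terms of z
  set M : Matrix (Fin m) (Fin m) L := (Matrix.of a).transpose with hM
  have hdM : M.det ≠ 0 := by rwa [hM, Matrix.det_transpose]
  set N : Matrix (Fin m) (Fin m) L := M⁻¹ with hN
  have hNM : N * M = 1 := Matrix.nonsing_inv_mul _ (isUnit_iff_ne_zero.2 hdM)
  have hxz : ∀ i, x i = ∑ j, algebraMap L K (N i j) * (z j - algebraMap L K (c j)) := by
    intro i
    have hzc : ∀ j, z j - algebraMap L K (c j) = ∑ k, algebraMap L K (a k j) * x k := by
      intro j
      rw [hzform j]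
      ring
    rw [show (∑ j, algebraMap L K (N i j) * (z j - algebraMap L K (c j)))
        = ∑ j, algebraMap L K (N i j) * ∑ k, algebraMap L K (a k j) * x k from
      Finset.sum_congr rfl fun j _ => by rw [hzc j]]
    symm
    have hNMa : ∀ k, (∑ j, N i j * a k j) = if i = k then 1 else 0 := by
      intro k
      have h1 : (N * M) i k = (1 : Matrix (Fin m) (Fin m) L) i k := by rw [hNM]
      rw [Matrix.mul_apply, Matrix.one_apply] at h1
      rw [← h1]
      rfl
    calc (∑ j, algebraMap L K (N i j) * ∑ k, algebraMap L K (a k j) * x k)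
        = ∑ k, (∑ j, N i j * a k j) • x k := by
          simp_rw [Finset.mul_sum]
          rw [Finset.sum_comm]
          refine Finset.sum_congr rfl fun k _ => ?_
          rw [Finset.sum_smul]
          refine Finset.sum_congr rfl fun j _ => ?_
          rw [Algebra.smul_def, map_mul, mul_assoc]
      _ = x i := by
          simp_rw [hNMa]
          rw [Finset.sum_eq_single i]
          · simp
          · intro k _ hk
            simp [Ne.symm hk]
          · intro hmem'
            exact absurd (Finset.mem_univ _) hmem'
  -- adjoin z = ⊤
  have hgen' : IntermediateField.adjoin L (Set.range z) = ⊤ := by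
    rw [eq_top_iff, ← hgen]
    rw [IntermediateField.adjoin_le_iff]
    rintro w ⟨i, rfl⟩
    rw [hxz i]
    refine sum_mem fun j _ => ?_
    refine mul_mem (IntermediateField.algebraMap_mem _ _) ?_
    exact sub_mem (IntermediateField.subset_adjoin L _ ⟨j, rfl⟩)
      (IntermediateField.algebraMap_mem _ _)
  -- algebraic independence over L
  have hzalgL : AlgebraicIndependent L z := algebraicIndependent_affine hx a c hdet hzform
  -- transfer algebraic independence to the image of the fixed subfield
  set F : Subfield K := (FixedPoints.subfield G L).map (algebraMap L K) with hF
  have hinjL : Function.Injective (algebraMap L K) := (algebraMap L K).injective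
  have hFmem : ∀ w : F, ∃ ℓ : L, ℓ ∈ FixedPoints.subfield G L ∧ algebraMap L K ℓ = (w : K) := by
    intro w
    obtain ⟨ℓ, hℓ, hval⟩ := Subfield.mem_map.1 w.2
    exact ⟨ℓ, hℓ, hval⟩
  choose gfun hgmem hgval using hFmem
  have hginj0 : ∀ w w' : F, gfun w = gfun w' → w = w' := fun w w' h =>
    Subtype.ext (by rw [← hgval w, ← hgval w', h])
  set gh : F →+* L :=
    { toFun := gfun
      map_one' := hinjL (by rw [hgval, map_one, OneMemClass.coe_one])
      map_mul' := fun w w' => hinjL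
        (by rw [hgval, map_mul, hgval, hgval, MulMemClass.coe_mul])
      map_zero' := hinjL (by rw [hgval, map_zero, ZeroMemClass.coe_zero])
      map_add' := fun w w' => hinjL
        (by rw [hgval, map_add, hgval, hgval, AddMemClass.coe_add]) } with hgh
  have hzalgF : AlgebraicIndependent F z := by
    rw [algebraicIndependent_iff_injective_aeval]
    have hfac : ((MvPolynomial.aeval z : MvPolynomial (Fin m) F →ₐ[F] K) :
          MvPolynomial (Fin m) F →+* K)
        = ((MvPolynomial.aeval z : MvPolynomial (Fin m) L →ₐ[L] K) :
          MvPolynomial (Fin m) L →+* K).comp (MvPolynomial.map (gh : F →+* L)) := by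
      apply MvPolynomial.ringHom_ext
      · intro w
        simp only [RingHom.comp_apply, MvPolynomial.map_C, RingHom.coe_coe, aeval_C]
        exact (hgval w).symm
      · intro j
        simp
    intro p q hpq
    have hp := DFunLike.congr_fun hfac p
    have hq := DFunLike.congr_fun hfac q
    simp only [RingHom.coe_coe, RingHom.comp_apply] at hp hq
    have h1 : MvPolynomial.map (gh : F →+* L) p = MvPolynomial.map (gh : F →+* L) q :=
      algebraicIndependent_iff_injective_aeval.1 hzalgL (by rw [← hp, ← hq]; exact hpq)
    exact MvPolynomial.map_injective _ (fun w w' h => hginj0 w w' h) h1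
  -- the subfield generated by the invariants
  set E : Subfield K := Subfield.closure (↑F ∪ Set.range z) with hE
  have hzE : ∀ j, z j ∈ E := fun j => Subfield.subset_closure (Or.inr ⟨j, rfl⟩)
  have hFE : ∀ w ∈ F, w ∈ E := fun w hw => Subfield.subset_closure (Or.inl hw)
  have hELeFix : E ≤ FixedPoints.subfield G K := by
    rw [hE, Subfield.closure_le]
    rintro w (hw | ⟨j, rfl⟩)
    · obtain ⟨ℓ, hℓ, rfl⟩ := Subfield.mem_map.1 hw
      show ∀ σ : G, σ • algebraMap L K ℓ = algebraMap L K ℓ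
      intro σ
      rw [hcompat, hℓ σ]
    · exact fun σ => hzinv σ j
  -- a spanning family of K over E
  set n : ℕ := finrank (FixedPoints.subfield G L) L with hn
  set β : Basis (Fin n) (FixedPoints.subfield G L) L := Module.finBasis _ _ with hβ
  set Y : Fin n → K := fun i => algebraMap L K (β i) with hY
  set W : Submodule E K := Submodule.span E (Set.range Y) with hW
  have himgL : ∀ ℓ : L, algebraMap L K ℓ ∈ W := by
    intro ℓ
    rw [← β.sum_repr ℓ, map_sum]
    refine Submodule.sum_mem _ fun i _ => ?_
    have h1 : algebraMap L K ((β.repr ℓ) i • β i)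
        = algebraMap L K ((β.repr ℓ i : L)) * Y i := by
      rw [hY, Algebra.smul_def, map_mul]
      rfl
    rw [h1]
    have hmemE : algebraMap L K ((β.repr ℓ i : L)) ∈ E :=
      hFE _ (Subfield.mem_map.2 ⟨_, (β.repr ℓ i).2, rfl⟩)
    have h2 : algebraMap L K ((β.repr ℓ i : L)) * Y i
        = (⟨_, hmemE⟩ : E) • Y i := rfl
    rw [h2]
    exact Submodule.smul_mem _ _ (Submodule.subset_span ⟨i, rfl⟩)
  have h1W : (1 : K) ∈ W := by simpa using himgL 1
  have hWmul : ∀ w₁ ∈ W, ∀ w₂ ∈ W, w₁ * w₂ ∈ W := by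
    intro w₁ hw₁ w₂ hw₂
    have hle : W * W ≤ W := by
      rw [hW, Submodule.span_mul_span, Submodule.span_le]
      rintro _ ⟨y₁, ⟨i, rfl⟩, y₂, ⟨i', rfl⟩, rfl⟩
      have h3 : Y i * Y i' = algebraMap L K (β i * β i') := by rw [hY]; simp
      show Y i * Y i' ∈ W
      rw [h3]
      exact himgL _
    exact hle (Submodule.mul_mem_mul hw₁ hw₂)
  have hzW : ∀ j, z j ∈ W := by
    intro j
    have h4 : z j = (⟨z j, hzE j⟩ : E) • (1 : K) := by
      rw [Algebra.smul_def, mul_one]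
      rfl
    rw [h4]
    exact Submodule.smul_mem _ _ h1W
  have hxW : ∀ i, x i ∈ W := by
    intro i
    rw [hxz i]
    refine Submodule.sum_mem _ fun j _ => ?_
    have hsplit : algebraMap L K (N i j) * (z j - algebraMap L K (c j))
        = (⟨z j, hzE j⟩ : E) • algebraMap L K (N i j) - algebraMap L K (N i j * c j) := by
      have h5 : (⟨z j, hzE j⟩ : E) • algebraMap L K (N i j)
          = z j * algebraMap L K (N i j) := rfl
      rw [h5, map_mul]
      ring
    rw [hsplit]
    exact Submodule.sub_mem _ (Submodule.smul_mem _ _ (himgL _)) (himgL _)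
  -- W is a subfield, hence all of K
  set Walg : Subalgebra E K := W.toSubalgebra h1W (fun a' b' ha' hb' => hWmul a' ha' b' hb')
    with hWalg
  have hWfg : W.FG := Submodule.fg_span (Set.finite_range Y)
  have hWinv : ∀ w ∈ W, w⁻¹ ∈ W := by
    intro w hw
    have hint : IsIntegral E w := IsIntegral.of_mem_of_fg Walg hWfg w hw
    exact Walg.inv_mem_of_algebraic (x := (⟨w, hw⟩ : Walg)) hint.isAlgebraic
  set Wfield : Subfield K := { Walg.toSubring with inv_mem' := fun w hw => hWinv w hw }
    with hWfield
  have hWtop : ∀ k : K, k ∈ W := by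
    intro k
    have hcl : Subfield.closure (Set.range (algebraMap L K) ∪ Set.range x)
        = (⊤ : Subfield K) := by
      have h6 := congrArg IntermediateField.toSubfield hgen
      rwa [IntermediateField.adjoin_toSubfield, IntermediateField.top_toSubfield] at h6
    have hsub2 : Subfield.closure (Set.range (algebraMap L K) ∪ Set.range x) ≤ Wfield := by
      rw [Subfield.closure_le]
      rintro w (⟨ℓ, rfl⟩ | ⟨i, rfl⟩)
      · exact himgL ℓ
      · exact hxW i
    exact hsub2 (by rw [hcl]; trivial)
  have hWeq : W = ⊤ := Submodule.eq_top_iff'.2 hWtop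
  haveI : Module.Finite E K := ⟨hWeq ▸ hWfg⟩
  haveI : Finite ↥(Set.range Y) := (Set.finite_range Y).to_subtype
  haveI : Fintype ↥(Set.range Y) := Fintype.ofFinite _
  have hrankle : finrank E K ≤ n := by
    have h7 := finrank_span_le_card (R := E) (Set.range Y)
    calc finrank E K = finrank E (⊤ : Submodule E K) := (finrank_top E K).symm
      _ = finrank E W := by rw [hWeq]
      _ ≤ (Set.range Y).toFinset.card := h7
      _ ≤ n := by
          rw [Set.toFinset_range]
          exact (Finset.card_image_le).trans (by simp)
  have hnG : n = Fintype.card G := FixedPoints.finrank_eq_card G L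
  haveI : FaithfulSMul G K :=
    ⟨fun {σ τ} h => FaithfulSMul.eq_of_smul_eq_smul (α := L)
      (fun ℓ => hinjL (by rw [← hcompat, ← hcompat, h]))⟩
  have hfixrank : finrank (FixedPoints.subfield G K) K = Fintype.card G :=
    FixedPoints.finrank_eq_card G K
  letI : Algebra E (FixedPoints.subfield G K) := (Subfield.inclusion hELeFix).toAlgebra
  haveI : IsScalarTower E (FixedPoints.subfield G K) K :=
    IsScalarTower.of_algebraMap_eq fun e => rfl
  have htower : finrank E (FixedPoints.subfield G K)
      * finrank (FixedPoints.subfield G K) K = finrank E K :=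
    finrank_mul_finrank E (FixedPoints.subfield G K) K
  haveI : Module.Finite E (FixedPoints.subfield G K) :=
    Module.Finite.left E (FixedPoints.subfield G K) K
  have hpos : 0 < finrank E (FixedPoints.subfield G K) := finrank_pos
  have hrank1 : finrank E (FixedPoints.subfield G K) = 1 := by
    have hle2 : finrank E (FixedPoints.subfield G K) * Fintype.card G
        ≤ 1 * Fintype.card G := by
      rw [one_mul, ← hfixrank, htower, hfixrank]
      rw [← hnG]
      exact hrankle
    have hGpos : 0 < Fintype.card G := Fintype.card_pos
    exact le_antisymm (Nat.le_of_mul_le_mul_right hle2 hGpos) hpos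
  have hFixle : FixedPoints.subfield G K ≤ E := by
    intro k hk
    have h1span : Submodule.span E ({1} : Set (FixedPoints.subfield G K)) = ⊤ :=
      (finrank_eq_one_iff_of_nonzero (1 : FixedPoints.subfield G K) one_ne_zero).1 hrank1
    have hmem2 : (⟨k, hk⟩ : FixedPoints.subfield G K)
        ∈ Submodule.span E ({1} : Set (FixedPoints.subfield G K)) := by
      rw [h1span]; trivial
    obtain ⟨e, he⟩ := Submodule.mem_span_singleton.1 hmem2
    have hco : (e : K) = k := by
      have h8 := congrArg Subtype.val he
      exact (by simpa [Algebra.smul_def, RingHom.algebraMap_toAlgebra] using h8 :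
        ((Subfield.inclusion hELeFix e : FixedPoints.subfield G K) : K) = k)
    rw [← hco]
    exact e.2
  exact ⟨a, c, z, hunit, hzform, hzinv, hgen', hzalgF, le_antisymm hFixle hELeFix⟩
end

section
/- Let p be a prime and G a transitive solvable subgroup of the symmetric group S_p. Then G is conjugate in S_p to a subgroup of the group G_{p(p−1)} = {i ↦ ai + b : a ∈ (ℤ/pℤ)^×, b ∈ ℤ/pℤ} of affine transformations of ℤ/pℤ. -/
section Aux

variable {p : ℕ} [Fact p.Prime]

private lemma addLeft_one_pow (n : ℕ) :
    (Equiv.addLeft (1 : ZMod p)) ^ n = Equiv.addLeft ((n : ZMod p)) := by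
  induction n with
  | zero =>
    ext x
    simp
  | succ n ih =>
    ext x
    rw [pow_succ, Equiv.Perm.mul_apply, ih]
    simp only [Equiv.coe_addLeft]
    push_cast
    ring

private lemma addLeft_one_zpow (k : ℤ) :
    (Equiv.addLeft (1 : ZMod p)) ^ k = Equiv.addLeft ((k : ZMod p)) := by
  cases k with
  | ofNat n =>
    simpa using addLeft_one_pow (p := p) n
  | negSucc n =>
    rw [zpow_negSucc, addLeft_one_pow]
    ext x
    simp only [Equiv.Perm.inv_def, Equiv.addLeft_symm, Equiv.coe_addLeft, Int.cast_negSucc]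
    try push_cast
    try ring_nf

end Aux

/-- Every transitive solvable subgroup of `S_p` (`p` prime) is conjugate in `S_p`
to a subgroup of the group of affine transformations `i ↦ a·i + b` of `ℤ/pℤ`. -/
theorem transitive_solvable_subgroup_conjugate_to_affine
    (p : ℕ) [Fact p.Prime]
    (G : Subgroup (Equiv.Perm (ZMod p)))
    (htrans : ∀ i j : ZMod p, ∃ g ∈ G, g i = j)
    (hsolv : IsSolvable G) :
    ∃ h : Equiv.Perm (ZMod p), ∀ g ∈ G,
      ∃ a b : ZMod p, a ≠ 0 ∧ ∀ i : ZMod p, (h * g * h⁻¹) i = a * i + b := by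
  classical
  have hp : p.Prime := Fact.out
  haveI : NeZero p := ⟨hp.ne_zero⟩
  -- `G` is nontrivial
  obtain ⟨g₀, hg₀G, hg₀⟩ := htrans 0 1
  haveI hKnt : Nontrivial ↥G := by
    refine ⟨⟨g₀, hg₀G⟩, 1, fun hEq => ?_⟩
    have hg1 : g₀ = 1 := congrArg Subtype.val hEq
    rw [hg1] at hg₀
    exact one_ne_zero ((Equiv.Perm.one_apply (0 : ZMod p)) ▸ hg₀).symm
  haveI htr : MulAction.IsPretransitive ↥G (ZMod p) := by
    refine ⟨fun i j => ?_⟩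
    obtain ⟨g, hg, hgi⟩ := htrans i j
    exact ⟨⟨g, hg⟩, hgi⟩
  -- minimal nontrivial term of the derived series
  have hex : ∃ k, derivedSeries ↥G k = ⊥ := hsolv.solvable
  have hn0 : Nat.find hex ≠ 0 := by
    intro h0
    have hspec := Nat.find_spec hex
    rw [h0, derivedSeries_zero] at hspec
    obtain ⟨x, y, hxy⟩ := hKnt
    have hx : x ∈ (⊤ : Subgroup ↥G) := Subgroup.mem_top x
    have hy : y ∈ (⊤ : Subgroup ↥G) := Subgroup.mem_top y
    rw [hspec, Subgroup.mem_bot] at hx hy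
    exact hxy (hx.trans hy.symm)
  set m : ℕ := Nat.find hex - 1 with hm
  have hm1 : m + 1 = Nat.find hex := by omega
  set N : Subgroup ↥G := derivedSeries ↥G m with hNdef
  have hNbot : N ≠ ⊥ := Nat.find_min hex (by omega)
  have hNsucc : derivedSeries ↥G (m + 1) = ⊥ := hm1 ▸ Nat.find_spec hex
  have hNcomm : ∀ x ∈ N, ∀ y ∈ N, x * y = y * x := by
    intro x hx y hy
    open scoped commutatorElement in
    have h1 : ⁅x, y⁆ ∈ (⊥ : Subgroup ↥G) := by
      rw [← hNsucc, derivedSeries_succ]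
      exact Subgroup.commutator_mem_commutator hx hy
    rw [Subgroup.mem_bot] at h1
    exact commutatorElement_eq_one_iff_commute.mp h1
  haveI hNnormal : N.Normal := derivedSeries_normal _ _
  -- a nontrivial element of `N`
  obtain ⟨σ₁', hσ₁'⟩ := Subgroup.ne_bot_iff_exists_ne_one.mp hNbot
  set σ₀ : ↥G := (σ₁' : ↥G) with hσ₀def
  have hσ₀N : σ₀ ∈ N := σ₁'.2
  have hσ₀1 : σ₀ ≠ 1 := by
    intro h
    exact hσ₁' (Subtype.ext h)
  set σ : Equiv.Perm (ZMod p) := (σ₀ : Equiv.Perm (ZMod p)) with hσdef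
  have hσ1 : σ ≠ 1 := fun h => hσ₀1 (Subtype.ext h)
  -- `N` acts transitively
  have hNtrans : ∀ i j : ZMod p, ∃ τ : ↥G, τ ∈ N ∧ τ • i = j := by
    obtain ⟨x, hx⟩ : ∃ x : ZMod p, σ₀ • x ≠ x := by
      by_contra hcon
      push_neg at hcon
      exact hσ1 (Equiv.ext fun x => hcon x)
    have hB : MulAction.IsBlock ↥G (MulAction.orbit N x) := MulAction.IsBlock.orbit_of_normal x
    have hBne : (MulAction.orbit N x).Nonempty := ⟨x, MulAction.mem_orbit_self x⟩
    have hcardX : Nat.card (ZMod p) = p := by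
      rw [Nat.card_eq_fintype_card, ZMod.card]
    have h2 : 1 < (MulAction.orbit N x).ncard := by
      rw [Set.one_lt_ncard (Set.toFinite _)]
      exact ⟨σ₀ • x, MulAction.mem_orbit x (⟨σ₀, hσ₀N⟩ : ↥N), x, MulAction.mem_orbit_self x, hx⟩
    have hdvd := hB.ncard_dvd_card hBne
    rw [hcardX] at hdvd
    have hncard : (MulAction.orbit N x).ncard = p := by
      rcases (hp.eq_one_or_self_of_dvd _ hdvd) with h | h
      · omega
      · exact h
    have huniv : MulAction.orbit N x = Set.univ := by
      refine Set.eq_of_subset_of_ncard_le (Set.subset_univ _) ?_ (Set.finite_univ)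
      rw [hncard, Set.ncard_univ, hcardX]
    intro i j
    have hi : i ∈ MulAction.orbit N x := huniv ▸ Set.mem_univ i
    have hj : j ∈ MulAction.orbit N x := huniv ▸ Set.mem_univ j
    obtain ⟨ni, hni⟩ := MulAction.mem_orbit_iff.mp hi
    obtain ⟨nj, hnj⟩ := MulAction.mem_orbit_iff.mp hj
    refine ⟨((nj * ni⁻¹ : ↥N) : ↥G), (nj * ni⁻¹ : ↥N).2, ?_⟩
    have : ((nj * ni⁻¹ : ↥N) : ↥G) • i = (nj * ni⁻¹ : ↥N) • i := rfl
    rw [this, ← hni, ← hnj, smul_smul, inv_mul_cancel_right]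
  -- stabilizers in `N` are trivial
  have hstab : ∀ (y : ZMod p) (τ : ↥G), τ ∈ N → τ • y = y → τ = 1 := by
    intro y τ hτ hfix
    have hz : ∀ z : ZMod p, τ • z = z := by
      intro z
      obtain ⟨μ, hμ, hμy⟩ := hNtrans y z
      rw [← hμy, smul_smul, hNcomm τ hτ μ hμ, mul_smul, hfix]
    exact Subtype.ext (Equiv.ext fun w => hz w)
  -- `N` has cardinality `p`
  have hcardN : Nat.card ↥N = p := by
    have hstab0 : MulAction.stabilizer ↥N (0 : ZMod p) = ⊥ := by
      rw [Subgroup.eq_bot_iff_forall]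
      intro τ hτ
      have h1 : (τ : ↥G) • (0 : ZMod p) = 0 := hτ
      have := hstab 0 (τ : ↥G) τ.2 h1
      exact Subtype.ext this
    have horb : MulAction.orbit ↥N (0 : ZMod p) = Set.univ := by
      refine Set.eq_univ_iff_forall.mpr fun j => ?_
      obtain ⟨τ, hτ, hτ0⟩ := hNtrans 0 j
      exact ⟨(⟨τ, hτ⟩ : ↥N), hτ0⟩
    calc Nat.card ↥N
        = Nat.card (↥N ⧸ (⊥ : Subgroup ↥N)) :=
          (Nat.card_congr (QuotientGroup.quotientBot (G := ↥N)).toEquiv).symm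
      _ = Nat.card (↥N ⧸ MulAction.stabilizer ↥N (0 : ZMod p)) := by rw [hstab0]
      _ = Nat.card (MulAction.orbit ↥N (0 : ZMod p)) :=
          (Nat.card_congr (MulAction.orbitEquivQuotientStabilizer ↥N (0 : ZMod p))).symm
      _ = Nat.card (ZMod p) := by rw [horb]; exact Nat.card_congr (Equiv.Set.univ _)
      _ = p := by rw [Nat.card_eq_fintype_card, ZMod.card]
  -- `σ` is a `p`-cycle
  set σ₂ : ↥N := ⟨σ₀, hσ₀N⟩ with hσ₂def
  have hσ₂1 : σ₂ ≠ 1 := fun h => hσ₀1 (congrArg Subtype.val h)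
  have hinj : Function.Injective ((G.subtype.comp N.subtype) : ↥N →* Equiv.Perm (ZMod p)) :=
    G.subtype_injective.comp N.subtype_injective
  have horderσ₂ : orderOf σ₂ = p := by
    have hdvd : orderOf σ₂ ∣ p := (orderOf_dvd_natCard σ₂).trans hcardN.dvd
    rcases (hp.eq_one_or_self_of_dvd _ hdvd) with h | h
    · exact absurd (orderOf_eq_one_iff.mp h) hσ₂1
    · exact h
  have horderσ : orderOf σ = p := by
    have h2 : orderOf ((G.subtype.comp N.subtype) σ₂) = orderOf σ₂ := orderOf_injective _ hinj σ₂
    have h3 : (G.subtype.comp N.subtype) σ₂ = σ := rfl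
    rw [h3] at h2
    exact h2.trans horderσ₂
  have hσcycle : σ.IsCycle := by
    refine Equiv.Perm.isCycle_of_prime_order'' ?_ ?_
    · rw [ZMod.card]; exact hp
    · rw [ZMod.card]; exact horderσ
  -- the standard `p`-cycle `c`
  set c : Equiv.Perm (ZMod p) := Equiv.addLeft (1 : ZMod p) with hcdef
  have hc1 : c ≠ 1 := by
    intro h
    have : c 0 = (0 : ZMod p) := by rw [h]; rfl
    simp only [hcdef, Equiv.coe_addLeft, add_zero] at this
    exact one_ne_zero this
  have hcp : c ^ p = 1 := by
    rw [hcdef, addLeft_one_pow]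
    ext x
    simp
  have horderc : orderOf c = p := by
    have hdvd : orderOf c ∣ p := orderOf_dvd_of_pow_eq_one hcp
    rcases (hp.eq_one_or_self_of_dvd _ hdvd) with h | h
    · exact absurd (orderOf_eq_one_iff.mp h) hc1
    · exact h
  have hccycle : c.IsCycle := by
    refine Equiv.Perm.isCycle_of_prime_order'' ?_ ?_
    · rw [ZMod.card]; exact hp
    · rw [ZMod.card]; exact horderc
  -- supports
  have hσsupp : σ.support = Finset.univ := by
    refine Finset.eq_univ_iff_forall.mpr fun y => ?_
    rw [Equiv.Perm.mem_support]
    intro hy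
    exact hσ₀1 (hstab y σ₀ hσ₀N hy)
  have hcsupp : c.support = Finset.univ := by
    refine Finset.eq_univ_iff_forall.mpr fun y => ?_
    rw [Equiv.Perm.mem_support]
    simp only [hcdef, Equiv.coe_addLeft]
    intro hy
    exact one_ne_zero (by linear_combination hy - (0 : ZMod p))
  -- conjugate `σ` to `c`
  have hconj : IsConj σ c :=
    hσcycle.isConj hccycle (by rw [hσsupp, hcsupp])
  obtain ⟨u, hu⟩ := isConj_iff.mp hconj
  refine ⟨u, fun g hgG => ?_⟩
  -- `g σ g⁻¹` is a power of `σ`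
  have hzpowers : Subgroup.zpowers σ₂ = ⊤ := by
    refine Subgroup.eq_top_of_card_eq _ ?_
    rw [Nat.card_zpowers, horderσ₂, hcardN]
  have hτ₀N : (⟨g, hgG⟩ : ↥G) * σ₀ * (⟨g, hgG⟩ : ↥G)⁻¹ ∈ N :=
    hNnormal.conj_mem σ₀ hσ₀N _
  obtain ⟨k, hk⟩ : ∃ k : ℤ, σ₂ ^ k = ⟨_, hτ₀N⟩ := by
    have : (⟨_, hτ₀N⟩ : ↥N) ∈ Subgroup.zpowers σ₂ := hzpowers ▸ Subgroup.mem_top _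
    exact Subgroup.mem_zpowers_iff.mp this
  have hkσ : g * σ * g⁻¹ = σ ^ k := by
    have := congrArg ((G.subtype.comp N.subtype) : ↥N →* Equiv.Perm (ZMod p)) hk
    rw [map_zpow] at this
    simpa using this.symm
  -- conjugated element is affine
  set a : ZMod p := ((k : ℤ) : ZMod p) with hadef
  set g' : Equiv.Perm (ZMod p) := u * g * u⁻¹ with hg'def
  have hconjc : g' * c * g'⁻¹ = Equiv.addLeft a := by
    have h1 : g' * c * g'⁻¹ = u * (g * σ * g⁻¹) * u⁻¹ := by
      rw [← hu, hg'def]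
      group
    rw [h1, hkσ, ← conj_zpow, hu, hcdef, addLeft_one_zpow]
  have ha0 : a ≠ 0 := by
    intro h
    rw [h] at hconjc
    have hcone : c = 1 := by
      have : Equiv.addLeft (0 : ZMod p) = (1 : Equiv.Perm (ZMod p)) := by
        ext x; simp
      rw [this] at hconjc
      have := congrArg (fun t => g'⁻¹ * t * g') hconjc
      simpa [mul_assoc] using this
    exact hc1 hcone
  have hstep : ∀ i : ZMod p, g' (1 + i) = a + g' i := by
    intro i
    have := congrArg (fun f : Equiv.Perm (ZMod p) => f i)
      (by rw [← hconjc]; group : Equiv.addLeft a * g' = g' * c)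
    simpa [Equiv.Perm.mul_apply, hcdef] using this.symm
  set b : ZMod p := g' 0 with hbdef
  have hnat : ∀ n : ℕ, g' ((n : ZMod p)) = a * n + b := by
    intro n
    induction n with
    | zero => simp [hbdef]
    | succ n ih =>
      have h1 : ((n + 1 : ℕ) : ZMod p) = 1 + (n : ZMod p) := by push_cast; ring
      rw [h1, hstep, ih]
      push_cast
      ring
  refine ⟨a, b, ha0, fun i => ?_⟩
  have : ((i.val : ℕ) : ZMod p) = i := ZMod.natCast_rightInverse i
  calc (u * g * u⁻¹) i = g' i := rfl
    _ = g' ((i.val : ℕ) : ZMod p) := by rw [this]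
    _ = a * (i.val : ZMod p) + b := hnat i.val
    _ = a * i + b := by rw [this]
end
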